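/- arXiv:2203.07758 — 2 statements merged into one kernel-verified Lean document; each statement's English description precedes it below -/
import Mathlib

section
/- Let λ < ε_{Ω+1} be a limit ordinal. Whenever θ < η < Ω, it follows that λ[θ] < λ[η]. -/
open Ordinal Set

noncomputable section
open scoped Classical

/-- `Ω`, the first uncountable ordinal. -/
def OmegaO : Ordinal := (Cardinal.aleph 1).ord

/-- `ε_{Ω+1}`, the least `ε > Ω` with `ω ^ ε = ε`. -/
def epsOmega : Ordinal := nfp (fun a => Ordinal.omega0 ^ a) (OmegaO + 1)

lemma omega0_le_OmegaO : Ordinal.omega0 ≤ OmegaO := by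
  rw [OmegaO, ← Cardinal.ord_aleph0]
  exact Cardinal.ord_le_ord.2 (Cardinal.aleph0_le_aleph 1)

lemma one_lt_OmegaO : 1 < OmegaO :=
  lt_of_lt_of_le Ordinal.one_lt_omega0 omega0_le_OmegaO

lemma OmegaO_pos : 0 < OmegaO := lt_trans zero_lt_one one_lt_OmegaO

/-- `ξ*`, the maximal coefficient in the `Ω`-normal form of `ξ`. -/
def star (ξ : Ordinal) : Ordinal :=
  if h0 : ξ = 0 then 0
  else if hl : log OmegaO ξ < ξ then
    max (max (star (log OmegaO ξ)) (star (ξ % OmegaO ^ log OmegaO ξ)))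
      (ξ / OmegaO ^ log OmegaO ξ)
  else 0
termination_by ξ
decreasing_by
  · exact hl
  · exact mod_opow_log_lt_self _ h0

/-- The generalized fundamental sequence `ξ[θ]`. -/
def fs (ξ θ : Ordinal) : Ordinal :=
  if h0 : ξ ≤ 1 then 0
  else if hmod : ξ % OmegaO ^ log OmegaO ξ ≠ 0 then
    OmegaO ^ log OmegaO ξ * (ξ / OmegaO ^ log OmegaO ξ) + fs (ξ % OmegaO ^ log OmegaO ξ) θ
  else if Order.IsSuccLimit (ξ / OmegaO ^ log OmegaO ξ) then OmegaO ^ log OmegaO ξ * θ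
  else if hβ : ξ / OmegaO ^ log OmegaO ξ = 1 then
    (if hlog : Order.IsSuccLimit (log OmegaO ξ) then
       (if hll : log OmegaO ξ < ξ then OmegaO ^ fs (log OmegaO ξ) θ else 0)
     else OmegaO ^ Ordinal.pred (log OmegaO ξ) * θ)
  else
    OmegaO ^ log OmegaO ξ * Ordinal.pred (ξ / OmegaO ^ log OmegaO ξ) + fs (OmegaO ^ log OmegaO ξ) θ
termination_by ξ
decreasing_by
  · exact mod_opow_log_lt_self _ (by intro h; exact h0 (by simp [h]))
  · exact hll
  · -- `Ω ^ log Ω ξ < ξ`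
    have hξ0 : ξ ≠ 0 := by intro h; exact h0 (by simp [h])
    have hle : OmegaO ^ log OmegaO ξ ≤ ξ := opow_log_le_self _ hξ0
    have hpos : 0 < OmegaO ^ log OmegaO ξ :=
      opow_pos _ OmegaO_pos
    have hβ0 : 0 < ξ / OmegaO ^ log OmegaO ξ :=
      Ordinal.div_pos (by positivity) |>.2 hle
    have hβ1 : 1 < ξ / OmegaO ^ log OmegaO ξ :=
      lt_of_le_of_ne (Order.one_le_iff_pos.2 hβ0) (Ne.symm hβ)
    calc OmegaO ^ log OmegaO ξ = OmegaO ^ log OmegaO ξ * 1 := (mul_one _).symm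
      _ < OmegaO ^ log OmegaO ξ * (ξ / OmegaO ^ log OmegaO ξ) := by
          exact mul_lt_mul_of_pos_left hβ1 hpos
      _ ≤ ξ := Ordinal.mul_div_le _ _

/-- The terminal part `τ(ξ)`. -/
def tau (ξ : Ordinal) : Ordinal :=
  if h0 : ξ = 0 then 0
  else if hmod : ξ % OmegaO ^ log OmegaO ξ ≠ 0 then tau (ξ % OmegaO ^ log OmegaO ξ)
  else if Order.IsSuccLimit (ξ / OmegaO ^ log OmegaO ξ) then ξ / OmegaO ^ log OmegaO ξ
  else if log OmegaO ξ = 0 then 1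
  else if hlog : Order.IsSuccLimit (log OmegaO ξ) then
    (if hll : log OmegaO ξ < ξ then tau (log OmegaO ξ) else 0)
  else OmegaO
termination_by ξ
decreasing_by
  · exact mod_opow_log_lt_self _ h0
  · exact hll

/-- The collapsing function `Θ_X`. -/
def ThetaF (X : Set Ordinal) (ξ : Ordinal) : Ordinal :=
  sInf {θ | θ ∈ X ∧ star ξ < θ ∧ ∀ ζ, ζ < ξ → star ζ < θ → ThetaF X ζ < θ}
termination_by ξ
decreasing_by exact by assumption

/-- `Ω_n`: the tower `Ω_0 = 1`, `Ω_{n+1} = Ω ^ Ω_n`. -/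
def OmegaTow : ℕ → Ordinal
  | 0 => 1
  | n + 1 => OmegaO ^ OmegaTow n

/-- `Θ_X(ε_{Ω+1}) = sup_n Θ_X(Ω_n)`. -/
def ThetaEps (X : Set Ordinal) : Ordinal := ⨆ n : ℕ, ThetaF X (OmegaTow n)

/-- `ε̂_{Ω+1}`. -/
def hatEps (X : Set Ordinal) : Set Ordinal :=
  {ξ | ξ < epsOmega ∧ star ξ < ThetaEps X}

/-- `X` is a club in `Ω`. -/
def IsClubBelowOmega (X : Set Ordinal) : Prop :=
  (∀ x ∈ X, x < OmegaO) ∧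
  (∀ a, a < OmegaO → ∃ x ∈ X, a < x) ∧
  (∀ S : Set Ordinal, S ⊆ X → S.Nonempty → sSup S < OmegaO → sSup S ∈ X)

/-- The set of limit points of `X` (below `Ω`). -/
def limitPtsOf (X : Set Ordinal) : Set Ordinal :=
  {x | 0 < x ∧ ∀ y, y < x → ∃ z ∈ X, y < z ∧ z < x}

/-- `FIX(X)`. -/
def FIXs (X : Set Ordinal) : Set Ordinal :=
  {ξ | ξ < epsOmega ∧ star (fs ξ 1) < star ξ ∧ star ξ = tau ξ ∧
    ∃ γ, ξ < γ ∧ γ < epsOmega ∧ star ξ = ThetaF X γ}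

/-- `JUMP(X)`. -/
def JUMPs (X : Set Ordinal) : Set Ordinal :=
  {0} ∪ {ξ | ∃ ζ, ξ = ζ + 1} ∪ FIXs X

/-- `Θ*`. -/
def ThetaStarF (X : Set Ordinal) (ξ : Ordinal) : Ordinal :=
  if ∃ ζ, ξ = ζ + 1 then ThetaF X (Ordinal.pred ξ)
  else if ξ ∈ FIXs X then tau ξ
  else 0

/-- `ξ̌`. -/
def checkF (X : Set Ordinal) (ξ : Ordinal) : Ordinal :=
  if 0 < ThetaStarF X ξ then OmegaO * (ξ / OmegaO) else ξ

/-- `ℙ`, the club of countable additively indecomposable ordinals. -/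
def PP : Set Ordinal := {x | x < OmegaO ∧ ∃ a, x = Ordinal.omega0 ^ a}

/-- `1 + Ord`, the club of nonzero countable ordinals. -/
def oneOrdS : Set Ordinal := {x | 0 < x ∧ x < OmegaO}

/-- `Θ^{(i)}(ξ)`. -/
def ThetaIter (X : Set Ordinal) (ξ : Ordinal) : ℕ → Ordinal
  | 0 => ThetaStarF X ξ
  | n + 1 => ThetaF X (fs (checkF X ξ) (ThetaIter X ξ n))

/-- A Buchholz system of fundamental sequences for `Θ_X`. -/
def IsBuchholz (X : Set Ordinal) (B : Ordinal → ℕ → Ordinal) : Prop :=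
  (∀ n, B 0 n = 0) ∧
  (∀ α ξ n, ξ ∈ hatEps X → OmegaO ≤ ξ → tau ξ < OmegaO → ξ = fs α (tau ξ) →
    B ξ n = fs α (B (tau ξ) n)) ∧
  (∀ ξ n, ξ ∈ hatEps X → 0 < tau (checkF X ξ) → tau (checkF X ξ) < OmegaO →
    B (ThetaF X ξ) n = ThetaF X (B (checkF X ξ) n + ThetaStarF X ξ)) ∧
  (∀ ξ n, ξ ∈ hatEps X → tau (checkF X ξ) = OmegaO →
    B (ThetaF X ξ) n = ThetaIter X ξ n)

/-- The additional clause for the `σ = Θ_{1+Ord}` Buchholz system. -/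
def SigmaExtra (B : Ordinal → ℕ → Ordinal) : Prop :=
  ∀ β n, β < OmegaO → B (ThetaF oneOrdS β) n = β

/-- The additional clauses for the `ϑ = Θ_ℙ` Buchholz system. -/
def VarthetaExtra (B : Ordinal → ℕ → Ordinal) : Prop :=
  (∀ α β n, 0 < β → (∀ α' < α, α' + β < α + β) → B (α + β) n = α + B β n) ∧
  (∀ β n, β < OmegaO → β ∈ JUMPs PP → B (ThetaF PP β) n = ThetaStarF PP β * n)


/-!
Induction on the limit ordinal `λ` along its `Ω`-normal form. In every clause of the definition,
`θ` enters either through `Ω ^ α * θ`, which is strictly increasing in `θ`, or through the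
fundamental sequence of a smaller limit ordinal (the remainder `γ`, the exponent `α`, or `Ω ^ α`),
followed by the strictly increasing maps `ζ ↦ δ + ζ` or `ζ ↦ Ω ^ ζ`. The bound `λ < ε_{Ω+1}`
guarantees `log_Ω λ < λ`, so the exponent clause never falls into the junk value `0`.
-/

lemma OmegaO_isSuccLimit : Order.IsSuccLimit OmegaO :=
  Cardinal.isSuccLimit_ord (Cardinal.aleph0_le_aleph 1)

lemma lt_of_opow_eq_self {b x : Ordinal} (hb : 1 < b) (h : b ^ x = x) : b < x := by
  have hx0 : x ≠ 0 := by rintro rfl; simp at h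
  have hx1 : x ≠ 1 := by rintro rfl; exact hb.ne' (by simpa using h)
  exact (left_lt_opow hb ((Order.one_le_iff_ne_zero.2 hx0).lt_of_ne hx1.symm)).trans_eq h

lemma omega0_opow_eq_self_of_opow_eq_self {b x : Ordinal} (hb : ω ≤ b) (h : b ^ x = x) :
    ω ^ x = x :=
  le_antisymm ((opow_le_opow_left x hb).trans_eq h) (right_le_opow x one_lt_omega0)

lemma epsOmega_le_of_omega0_opow_eq_self {x : Ordinal} (hx : OmegaO < x) (h : ω ^ x = x) :
    epsOmega ≤ x :=
  nfp_le_fp (fun _ _ hab => opow_le_opow_right omega0_pos hab) (Order.add_one_le_iff.2 hx) h.le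

lemma log_OmegaO_lt_self {x : Ordinal} (hx : x ≠ 0) (hlt : x < epsOmega) :
    log OmegaO x < x := by
  refine (log_le_self OmegaO x).lt_of_ne fun hlog => hlt.not_ge ?_
  have hfix : OmegaO ^ x = x := by
    refine le_antisymm ?_ (right_le_opow x one_lt_OmegaO)
    calc OmegaO ^ x = OmegaO ^ log OmegaO x := by rw [hlog]
      _ ≤ x := opow_log_le_self OmegaO hx
  exact epsOmega_le_of_omega0_opow_eq_self (lt_of_opow_eq_self one_lt_OmegaO hfix)
    (omega0_opow_eq_self_of_opow_eq_self omega0_le_OmegaO hfix)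

lemma isSuccLimit_mod {x d : Ordinal} (hx : Order.IsSuccLimit x) (h : x % d ≠ 0) :
    Order.IsSuccLimit (x % d) := by
  rw [← Ordinal.div_add_mod x d, Ordinal.isSuccLimit_add_iff] at hx
  exact hx.resolve_right fun hx' => h hx'.1

lemma lt_of_le_of_div_ne_one {d x : Ordinal} (hd : d ≠ 0) (hdx : d ≤ x) (h : x / d ≠ 1) :
    d < x :=
  hdx.lt_of_ne (by rintro rfl; exact h (Ordinal.div_self hd))

theorem fs_strictMono {lam : Ordinal} (hlam : lam < epsOmega) (hlim : Order.IsSuccLimit lam) :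
    StrictMono (fs lam) := by
  induction lam using WellFoundedLT.induction with
  | _ lam ih =>
  have hne : lam ≠ 0 := hlim.ne_bot
  have hle : OmegaO ^ log OmegaO lam ≤ lam := opow_log_le_self _ hne
  have hpos : 0 < OmegaO ^ log OmegaO lam := opow_pos _ OmegaO_pos
  have hlog : log OmegaO lam < lam := log_OmegaO_lt_self hne hlam
  have h1 : ¬lam ≤ 1 := not_le.2 (one_lt_of_isSuccLimit hlim)
  intro θ η hθη
  rw [fs.eq_1 lam θ, fs.eq_1 lam η, dif_neg h1, dif_neg h1]
  -- `split_ifs` discharges the junk branch `¬ log Ω λ < λ` with `hlog`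
  split_ifs with hmod hβlim hβ1 hloglim
  · have hγ : lam % OmegaO ^ log OmegaO lam < lam := mod_opow_log_lt_self _ hne
    exact (add_lt_add_iff_left _).2 (ih _ hγ (hγ.trans hlam) (isSuccLimit_mod hlim hmod) hθη)
  · exact mul_lt_mul_of_pos_left hθη hpos
  · exact (opow_lt_opow_iff_right one_lt_OmegaO).2 (ih _ hlog (hlog.trans hlam) hloglim hθη)
  · exact mul_lt_mul_of_pos_left hθη (opow_pos _ OmegaO_pos)
  · have hlt : OmegaO ^ log OmegaO lam < lam := lt_of_le_of_div_ne_one hpos.ne' hle hβ1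
    have hlog0 : log OmegaO lam ≠ 0 := by
      intro h
      rw [h, opow_zero, Ordinal.div_one] at hβlim
      exact hβlim hlim
    exact (add_lt_add_iff_left _).2 (ih _ hlt (hlt.trans hlam)
      (isSuccLimit_opow_left OmegaO_isSuccLimit hlog0) hθη)

theorem stmt2_general (lam : Ordinal) (hlam : lam < epsOmega) (hlim : Order.IsSuccLimit lam)
    (θ η : Ordinal) (h1 : θ < η) :
    fs lam θ < fs lam η :=
  fs_strictMono hlam hlim h1

/-- If `θ < η < Ω` then `λ[θ] < λ[η]` for limit `λ < ε_{Ω+1}`. -/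
theorem stmt2 (lam : Ordinal) (hlam : lam < epsOmega) (hlim : Order.IsSuccLimit lam)
    (θ η : Ordinal) (h1 : θ < η) (h2 : η < OmegaO) :
    fs lam θ < fs lam η :=
  stmt2_general lam hlam hlim θ η h1

end
end

section
/- For every club X ⊆ Ω with 0 ∉ X, the function Θ_X : ε_{Ω+1} → Ω is well-defined and total: for every ξ < ε_{Ω+1}, assuming Θ_X takes countable values on all ζ < ξ, there exists a countable θ ∈ X with θ > ξ* such that Θ_X(ζ) < θ for every ζ < ξ with ζ* < θ; in particular the least such θ, namely Θ_X(ξ), exists and is countable. -/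
open Ordinal Set

noncomputable section
open scoped Classical

/-!
An element of `X` above `ξ*` that is closed under `t ↦ sup {Θ_X(ζ) | ζ < ξ, ζ* ≤ t}` is a
candidate in the definition of `Θ_X(ξ)`. Every ordinal below `ε_{Ω+1}` is built from `0` by
finitely many steps `(α, β, γ) ↦ Ω ^ α * β + γ` with coefficients `β ≤ ζ*`, so for countable `t`
only countably many `ζ` qualify and this map sends countable ordinals to countable ordinals.
A club in `Ω` contains closure points of any such map above any countable ordinal: the supremum
of an `ω`-sequence in `X` in which each term lies above the values of the map at or below the
previous one.
-/

lemma OmegaO_eq_omega_one : OmegaO = ω₁ := Cardinal.ord_aleph 1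

lemma iSup_lt_OmegaO {ι : Type*} [Countable ι] {f : ι → Ordinal} (hf : ∀ i, f i < OmegaO) :
    ⨆ i, f i < OmegaO := by
  rw [OmegaO_eq_omega_one] at hf ⊢
  exact iSup_lt_omega_one hf

lemma countable_Iic_of_lt_OmegaO {η : Ordinal} (hη : η < OmegaO) : (Iic η).Countable := by
  rw [← Cardinal.le_aleph0_iff_set_countable, ← Order.Iio_succ, Cardinal.mk_Iio_ordinal,
    Cardinal.lift_le_aleph0, ← Cardinal.lt_aleph_one_iff, ← Cardinal.lt_ord]
  exact (Cardinal.isSuccLimit_ord (Cardinal.aleph0_le_aleph 1)).succ_lt hη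

lemma star_lt_OmegaO (ζ : Ordinal) : star ζ < OmegaO := by
  induction ζ using WellFoundedLT.induction with
  | _ ζ IH =>
    rw [star.eq_def]
    split_ifs with h0 hl
    · exact OmegaO_pos
    · exact max_lt (max_lt (IH _ hl) (IH _ (mod_opow_log_lt_self _ h0)))
        (div_opow_log_lt _ one_lt_OmegaO)
    · exact OmegaO_pos

lemma log_OmegaO_lt_self_s3 {ζ : Ordinal} (h0 : ζ ≠ 0) (hζ : ζ < epsOmega) : log OmegaO ζ < ζ := by
  refine (log_le_self OmegaO ζ).lt_of_ne fun hfix => hζ.not_ge ?_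
  have hpow : OmegaO ^ ζ ≤ ζ := by
    have := opow_log_le_self OmegaO h0
    rwa [hfix] at this
  have hΩ_le : OmegaO ≤ ζ := (left_le_opow _ (pos_iff_ne_zero.2 h0)).trans hpow
  have hΩ_lt : OmegaO < ζ :=
    calc OmegaO = OmegaO ^ (1 : Ordinal) := (opow_one _).symm
      _ < OmegaO ^ ζ := (opow_lt_opow_iff_right one_lt_OmegaO).2 (one_lt_OmegaO.trans_le hΩ_le)
      _ ≤ ζ := hpow
  exact nfp_le_fp (fun _ _ hab => opow_le_opow_right omega0_pos hab) (Order.add_one_le_of_lt hΩ_lt)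
    ((opow_le_opow_left ζ omega0_le_OmegaO).trans hpow)

lemma star_eq_max {ζ : Ordinal} (h0 : ζ ≠ 0) (hζ : ζ < epsOmega) :
    star ζ = max (max (star (log OmegaO ζ)) (star (ζ % OmegaO ^ log OmegaO ζ)))
      (ζ / OmegaO ^ log OmegaO ζ) := by
  rw [star.eq_def, dif_neg h0, dif_pos (log_OmegaO_lt_self_s3 h0 hζ)]

def boundedCoeffStage (η : Ordinal) : ℕ → Set Ordinal
  | 0 => {0}
  | n + 1 => boundedCoeffStage η n ∪
      (fun p : Ordinal × Ordinal × Ordinal => OmegaO ^ p.1 * p.2.1 + p.2.2) ''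
        (boundedCoeffStage η n ×ˢ Iic η ×ˢ boundedCoeffStage η n)

lemma countable_boundedCoeffStage {η : Ordinal} (hη : (Iic η).Countable) (n : ℕ) :
    (boundedCoeffStage η n).Countable := by
  induction n with
  | zero => exact countable_singleton 0
  | succ n ih => exact ih.union ((ih.prod (hη.prod ih)).image _)

lemma monotone_boundedCoeffStage (η : Ordinal) : Monotone (boundedCoeffStage η) :=
  monotone_nat_of_le_succ fun _ => subset_union_left

lemma exists_mem_boundedCoeffStage {η ζ : Ordinal} (hζ : ζ < epsOmega) (hstar : star ζ ≤ η) :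
    ∃ n, ζ ∈ boundedCoeffStage η n := by
  induction ζ using WellFoundedLT.induction with
  | _ ζ IH =>
    rcases eq_or_ne ζ 0 with rfl | h0
    · exact ⟨0, rfl⟩
    have hlog := log_OmegaO_lt_self_s3 h0 hζ
    have hmod := mod_opow_log_lt_self OmegaO h0
    rw [star_eq_max h0 hζ, max_le_iff, max_le_iff] at hstar
    obtain ⟨⟨hα, hγ⟩, hβ⟩ := hstar
    obtain ⟨m, hm⟩ := IH _ hlog (hlog.trans hζ) hα
    obtain ⟨k, hk⟩ := IH _ hmod (hmod.trans hζ) hγ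
    have hmono := monotone_boundedCoeffStage η
    exact ⟨max m k + 1, Or.inr ⟨(_, _, _),
      ⟨hmono (le_max_left m k) hm, hβ, hmono (le_max_right m k) hk⟩, div_add_mod ζ _⟩⟩

lemma countable_setOf_star_le {η : Ordinal} (hη : η < OmegaO) :
    {ζ | ζ < epsOmega ∧ star ζ ≤ η}.Countable :=
  (countable_iUnion (countable_boundedCoeffStage (countable_Iic_of_lt_OmegaO hη))).mono
    fun _ ⟨hζ, hstar⟩ => mem_iUnion.2 (exists_mem_boundedCoeffStage hζ hstar)

lemma IsClubBelowOmega.exists_closed_under {X : Set Ordinal} (hX : IsClubBelowOmega X)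
    {f : Ordinal → Ordinal} (hf : ∀ t < OmegaO, f t < OmegaO) {a : Ordinal} (ha : a < OmegaO) :
    ∃ θ ∈ X, θ < OmegaO ∧ a < θ ∧ ∀ t < θ, f t < θ := by
  obtain ⟨hXΩ, hXunbdd, hXclosed⟩ := hX
  have hnext : ∀ t, ∃ x, t < OmegaO → x ∈ X ∧ t < x ∧ ∀ s ≤ t, f s < x := by
    intro t
    by_cases ht : t < OmegaO
    · have : Countable (Iic t) := (countable_Iic_of_lt_OmegaO ht).to_subtype
      have hsup : max t (⨆ s : Iic t, f s) < OmegaO :=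
        max_lt ht (iSup_lt_OmegaO fun s => hf s (s.2.trans_lt ht))
      obtain ⟨x, hxX, hx⟩ := hXunbdd _ hsup
      exact ⟨x, fun _ => ⟨hxX, (le_max_left _ _).trans_lt hx, fun s hs =>
        ((Ordinal.le_iSup (fun s : Iic t => f s) ⟨s, hs⟩).trans (le_max_right _ _)).trans_lt hx⟩⟩
    · exact ⟨0, fun h => absurd h ht⟩
  choose next hnext using hnext
  set θ : ℕ → Ordinal := fun n => next^[n + 1] a
  have hθ_succ (n : ℕ) : θ (n + 1) = next (θ n) := Function.iterate_succ_apply' next (n + 1) a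
  have hθ_mem (n : ℕ) : θ n ∈ X := by
    induction n with
    | zero => exact (hnext a ha).1
    | succ n ih => rw [hθ_succ]; exact (hnext _ (hXΩ _ ih)).1
  have hsupΩ : ⨆ n, θ n < OmegaO := iSup_lt_OmegaO fun n => hXΩ _ (hθ_mem n)
  refine ⟨⨆ n, θ n, hXclosed _ (range_subset_iff.2 hθ_mem) (range_nonempty θ) hsupΩ, hsupΩ,
    (hnext a ha).2.1.trans_le (Ordinal.le_iSup θ 0), fun t ht => ?_⟩
  obtain ⟨n, hn⟩ := Ordinal.lt_iSup_iff.1 ht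
  calc f t < θ (n + 1) := hθ_succ n ▸ (hnext _ (hXΩ _ (hθ_mem n))).2.2 t hn.le
    _ ≤ ⨆ n, θ n := Ordinal.le_iSup θ _

def thetaCandidates (X : Set Ordinal) (ξ : Ordinal) : Set Ordinal :=
  {θ | θ ∈ X ∧ star ξ < θ ∧ ∀ ζ, ζ < ξ → star ζ < θ → ThetaF X ζ < θ}

lemma ThetaF_eq_sInf_thetaCandidates (X : Set Ordinal) (ξ : Ordinal) :
    ThetaF X ξ = sInf (thetaCandidates X ξ) := by
  rw [ThetaF, thetaCandidates]

lemma ThetaF_mem_thetaCandidates {X : Set Ordinal} {ξ θ : Ordinal}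
    (hθ : θ ∈ thetaCandidates X ξ) : ThetaF X ξ ∈ thetaCandidates X ξ :=
  ThetaF_eq_sInf_thetaCandidates X ξ ▸ csInf_mem ⟨θ, hθ⟩

lemma ThetaF_le_of_mem_thetaCandidates {X : Set Ordinal} {ξ θ : Ordinal}
    (hθ : θ ∈ thetaCandidates X ξ) : ThetaF X ξ ≤ θ :=
  ThetaF_eq_sInf_thetaCandidates X ξ ▸ csInf_le' hθ

theorem stmt3_general (X : Set Ordinal) (hX : IsClubBelowOmega X)
    (ξ : Ordinal) (hξ : ξ < epsOmega) (ih : ∀ ζ, ζ < ξ → ThetaF X ζ < OmegaO) :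
    (∃ θ, θ ∈ X ∧ θ < OmegaO ∧ star ξ < θ ∧
      ∀ ζ, ζ < ξ → star ζ < θ → ThetaF X ζ < θ) ∧
    ThetaF X ξ ∈ X ∧ star ξ < ThetaF X ξ ∧
    (∀ ζ, ζ < ξ → star ζ < ThetaF X ξ → ThetaF X ζ < ThetaF X ξ) ∧
    ThetaF X ξ < OmegaO := by
  have hcount : ∀ t < OmegaO, Countable {ζ | ζ < ξ ∧ star ζ ≤ t} := by
    intro t ht
    have hsub : {ζ | ζ < ξ ∧ star ζ ≤ t} ⊆ {ζ | ζ < epsOmega ∧ star ζ ≤ t} :=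
      fun _ hζ => ⟨hζ.1.trans hξ, hζ.2⟩
    exact ((countable_setOf_star_le ht).mono hsub).to_subtype
  have hbound : ∀ t < OmegaO, ⨆ ζ : {ζ | ζ < ξ ∧ star ζ ≤ t}, ThetaF X ζ < OmegaO :=
    fun t ht => have := hcount t ht; iSup_lt_OmegaO fun ζ => ih ζ ζ.2.1
  obtain ⟨θ, hθX, hθΩ, hξθ, hθ⟩ := hX.exists_closed_under hbound (star_lt_OmegaO ξ)
  have hθC : θ ∈ thetaCandidates X ξ := by
    refine ⟨hθX, hξθ, fun ζ hζ hζθ => ?_⟩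
    have := hcount _ (star_lt_OmegaO ζ)
    calc ThetaF X ζ ≤ ⨆ ζ' : {ζ' | ζ' < ξ ∧ star ζ' ≤ star ζ}, ThetaF X ζ' :=
          Ordinal.le_iSup (fun ζ' : {ζ' | ζ' < ξ ∧ star ζ' ≤ star ζ} => ThetaF X ζ')
            ⟨ζ, hζ, le_rfl⟩
      _ < θ := hθ _ hζθ
  obtain ⟨hΘX, hξΘ, hΘ⟩ := ThetaF_mem_thetaCandidates hθC
  exact ⟨⟨θ, hθX, hθΩ, hθC.2⟩, hΘX, hξΘ, hΘ,
    (ThetaF_le_of_mem_thetaCandidates hθC).trans_lt hθΩ⟩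

/-- `Θ_X` is well-defined and total. -/
theorem stmt3 (X : Set Ordinal) (hX : IsClubBelowOmega X) (h0X : 0 ∉ X)
    (ξ : Ordinal) (hξ : ξ < epsOmega) (ih : ∀ ζ, ζ < ξ → ThetaF X ζ < OmegaO) :
    (∃ θ, θ ∈ X ∧ θ < OmegaO ∧ star ξ < θ ∧
      ∀ ζ, ζ < ξ → star ζ < θ → ThetaF X ζ < θ) ∧
    ThetaF X ξ ∈ X ∧ star ξ < ThetaF X ξ ∧
    (∀ ζ, ζ < ξ → star ζ < ThetaF X ξ → ThetaF X ζ < ThetaF X ξ) ∧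
    ThetaF X ξ < OmegaO :=
  stmt3_general X hX ξ hξ ih

end
end
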